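/- arXiv:1412.8431 — 4 statements merged into one kernel-verified Lean document; each statement's English description precedes it below -/
import Mathlib

section
/- For every integer n, the two-sided circle action on SU(3) defining the Eschenburg space W^7_n is free: if u is a complex number with |u| = 1 and there exists A in SU(3) such that diag(u^{2n}, u^{2n}, u^2) · A · diag(u^{-(1+2n)}, u^{-(1+2n)}, 1) = A, then u = 1. -/
/-!
On the upper-left `2 × 2` block the action multiplies each entry by
`u ^ (2n) * u ^ (-(1 + 2n)) = u⁻¹`, so a fixed matrix with `u ≠ 1` has a vanishing upper-left
`2 × 2` block. Every term of the Leibniz expansion of a `3 × 3` determinant meets that block,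
so the determinant would be `0`, not `1`.
-/

-- The exponents add up to `-1 ≠ 0`, so this also holds for `a = 0`.
theorem zpow_mul_zpow_neg_one_add {G₀ : Type*} [GroupWithZero G₀] (a : G₀) (m : ℤ) :
    a ^ m * a ^ (-(1 + m)) = a⁻¹ := by
  rw [← zpow_add' (Or.inr (Or.inl (by omega))), show m + -(1 + m) = -1 by ring, zpow_neg_one]

theorem eq_zero_of_zpow_mul_mul_zpow_neg_one_add_eq_self {K : Type*} [Field K] {u a : K}
    (hu : u ≠ 1) (m : ℤ) (h : u ^ m * a * u ^ (-(1 + m)) = a) : a = 0 := by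
  rw [mul_right_comm, zpow_mul_zpow_neg_one_add] at h
  exact (mul_left_eq_self₀.mp h).resolve_left (inv_ne_one.mpr hu)

theorem Matrix.det_fin_three_eq_zero_of_upper_left_eq_zero {R : Type*} [CommRing R]
    (A : Matrix (Fin 3) (Fin 3) R) (h : ∀ i j : Fin 3, i ≠ 2 → j ≠ 2 → A i j = 0) :
    A.det = 0 := by
  simp [Matrix.det_fin_three, h 0 0, h 0 1, h 1 0, h 1 1]

theorem eschenburg_action_free_general (n : ℤ) (u : ℂ)
    (h : ∃ A ∈ Matrix.specialUnitaryGroup (Fin 3) ℂ,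
      Matrix.diagonal ![u ^ (2 * n), u ^ (2 * n), u ^ (2 : ℤ)] * A *
        Matrix.diagonal ![u ^ (-(1 + 2 * n)), u ^ (-(1 + 2 * n)), 1] = A) :
    u = 1 := by
  obtain ⟨A, hA, hfix⟩ := h
  by_contra hu
  have hblock : ∀ i j : Fin 3, i ≠ 2 → j ≠ 2 → A i j = 0 := by
    intro i j hi hj
    have hij := congrFun (congrFun hfix i) j
    rw [Matrix.mul_diagonal, Matrix.diagonal_mul] at hij
    refine eq_zero_of_zpow_mul_mul_zpow_neg_one_add_eq_self hu (2 * n) ?_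
    fin_cases i <;> fin_cases j <;> simp_all
  have hdet : A.det = 1 := (Matrix.mem_specialUnitaryGroup_iff.mp hA).2
  exact one_ne_zero (hdet ▸ A.det_fin_three_eq_zero_of_upper_left_eq_zero hblock)

/-- Freeness of the two-sided circle action on `SU(3)` defining the Eschenburg space `W⁷_n`:
if `|u| = 1` and `diag(u^{2n}, u^{2n}, u²) · A · diag(u^{-(1+2n)}, u^{-(1+2n)}, 1) = A` for some
`A ∈ SU(3)`, then `u = 1`. -/
theorem eschenburg_action_free (n : ℤ) (u : ℂ) (hu : ‖u‖ = 1)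
    (h : ∃ A ∈ Matrix.specialUnitaryGroup (Fin 3) ℂ,
      Matrix.diagonal ![u ^ (2 * n), u ^ (2 * n), u ^ (2 : ℤ)] * A *
        Matrix.diagonal ![u ^ (-(1 + 2 * n)), u ^ (-(1 + 2 * n)), 1] = A) :
    u = 1 :=
  eschenburg_action_free_general n u h
end

section
/- The quotient space SU(3)/SU(2) is homeomorphic to the 5-sphere: the third-column map π̃ : SU(3) → S⁵ descends to a homeomorphism from the orbit space of the right multiplication action of the embedded SU(2) on SU(3) onto the unit sphere S⁵ of ℂ³. -/
/-!
The third-column map `SU(3) → S⁵` is continuous and constant on right `ι(SU(2))`-cosets. It is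
onto: a unit vector extends to an orthonormal basis, i.e. a unitary matrix, and rescaling its
first column by the conjugate of the determinant makes the determinant `1`. Its fibres are
exactly the cosets: if `A` and `B` have the same third column then `M = A⁻¹B` fixes `e₃`, hence so
does `M⁻¹ = M*`, so `M` is block diagonal, `M = ι(C)` with `C ∈ SU(2)`. A continuous bijection from
the compact quotient to the Hausdorff sphere is a homeomorphism.
-/

/-- The embedding `ι : SU(2) → SU(3)`, `A ↦ diag(A, 1)`. -/
def iota (C : Matrix (Fin 2) (Fin 2) ℂ) : Matrix (Fin 3) (Fin 3) ℂ :=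
  !![C 0 0, C 0 1, 0;
     C 1 0, C 1 1, 0;
     0,     0,     1]

/-- The orbit relation of the right multiplication action of the embedded `SU(2)` on `SU(3)`. -/
def su2Rel (A B : Matrix.specialUnitaryGroup (Fin 3) ℂ) : Prop :=
  ∃ C ∈ Matrix.specialUnitaryGroup (Fin 2) ℂ, (B : Matrix (Fin 3) (Fin 3) ℂ) = A * iota C

open Matrix

namespace Matrix

variable {n 𝕜 : Type*} [Fintype n] [DecidableEq n] [RCLike 𝕜]

theorem mulVec_eq_self_of_mul_eq_one {R : Type*} [CommSemiring R] {M N : Matrix n n R}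
    (h : N * M = 1) {v : n → R} (hv : M *ᵥ v = v) : N *ᵥ v = v :=
  calc N *ᵥ v = N *ᵥ (M *ᵥ v) := by rw [hv]
    _ = v := by rw [mulVec_mulVec, h, one_mulVec]

theorem isCompact_unitaryGroup : IsCompact (unitaryGroup n 𝕜 : Set (Matrix n n 𝕜)) := by
  have : T1Space (Matrix n n 𝕜) := inferInstanceAs (T1Space (n → n → 𝕜))
  have hclosed : IsClosed (unitaryGroup n 𝕜 : Set (Matrix n n 𝕜)) := isClosed_unitary
  open scoped Matrix.Norms.Elementwise in
  exact have : ProperSpace (Matrix n n 𝕜) := inferInstanceAs (ProperSpace (n → n → 𝕜))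
    Metric.isCompact_of_isClosed_isBounded hclosed <| Metric.isBounded_closedBall.subset
      fun _ hU => mem_closedBall_zero_iff.2 (entrywise_sup_norm_bound_of_unitary hU)

theorem isCompact_specialUnitaryGroup :
    IsCompact (specialUnitaryGroup n 𝕜 : Set (Matrix n n 𝕜)) :=
  isCompact_unitaryGroup.inter_right (isClosed_eq (continuous_id.matrix_det) continuous_const)

instance : CompactSpace (specialUnitaryGroup n 𝕜) :=
  isCompact_iff_compactSpace.mp isCompact_specialUnitaryGroup

theorem norm_toLp_col_of_mem_unitaryGroup {U : Matrix n n 𝕜} (hU : U ∈ unitaryGroup n 𝕜) (k : n) :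
    ‖WithLp.toLp 2 (U.col k)‖ = 1 := by
  have hU' : toEuclideanCLM (n := n) (𝕜 := 𝕜) U ∈ unitary _ := Unitary.map_mem _ hU
  rw [← mulVec_single_one, ← toEuclideanCLM_toLp,
    ContinuousLinearMap.norm_map_of_mem_unitary hU']
  simp

theorem exists_mem_unitaryGroup_col_eq (k : n) {v : EuclideanSpace 𝕜 n} (hv : ‖v‖ = 1) :
    ∃ U ∈ unitaryGroup n 𝕜, WithLp.toLp 2 (U.col k) = v := by
  have hv' : Orthonormal 𝕜 (({k} : Set n).domRestrict fun _ => v) :=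
    ⟨fun _ => hv, fun i j hij => absurd (Subtype.ext (i.2.trans j.2.symm)) hij⟩
  obtain ⟨b, hb⟩ := hv'.exists_orthonormalBasis_extension_of_card_eq (by simp)
  refine ⟨(EuclideanSpace.basisFun n 𝕜).toBasis.toMatrix b,
    (EuclideanSpace.basisFun n 𝕜).toMatrix_orthonormalBasis_mem_unitary b, ?_⟩
  ext i
  simp [Module.Basis.toMatrix_apply, hb k rfl]

theorem diagonal_mem_unitaryGroup {d : n → 𝕜} (hd : d ∈ unitary (n → 𝕜)) :
    diagonal d ∈ unitaryGroup n 𝕜 := by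
  rw [mem_unitaryGroup_iff', star_eq_conjTranspose, diagonal_conjTranspose,
    diagonal_mul_diagonal]
  exact (congrArg diagonal (Unitary.star_mul_self_of_mem hd)).trans diagonal_one

theorem exists_mem_specialUnitaryGroup_col_eq {j k : n} (hjk : j ≠ k) {v : EuclideanSpace 𝕜 n}
    (hv : ‖v‖ = 1) : ∃ A ∈ specialUnitaryGroup n 𝕜, WithLp.toLp 2 (A.col k) = v := by
  obtain ⟨U, hU, hUk⟩ := exists_mem_unitaryGroup_col_eq k hv
  have hdet : star U.det * U.det = 1 := (det_of_mem_unitary hU).1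
  set d : n → 𝕜 := Pi.mulSingle j (star U.det)
  have hd : d ∈ unitary (n → 𝕜) := by
    rw [Unitary.mem_iff, Pi.star_mulSingle, ← Pi.mulSingle_mul, ← Pi.mulSingle_mul, star_star,
      hdet, mul_comm, hdet, Pi.mulSingle_one]
    exact ⟨rfl, rfl⟩
  refine ⟨U * diagonal d,
    mem_specialUnitaryGroup_iff.2 ⟨mul_mem hU (diagonal_mem_unitaryGroup hd), ?_⟩, ?_⟩
  · rw [det_mul, det_diagonal, Fintype.prod_pi_mulSingle', mul_comm, hdet]
  · ext i
    simp [d, mul_diagonal, Pi.mulSingle_eq_of_ne hjk.symm, ← hUk]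

namespace specialUnitaryGroup

noncomputable def colToSphere (k : n) (A : specialUnitaryGroup n 𝕜) :
    Metric.sphere (0 : EuclideanSpace 𝕜 n) 1 :=
  ⟨WithLp.toLp 2 ((A : Matrix n n 𝕜).col k), mem_sphere_zero_iff_norm.2 <|
    norm_toLp_col_of_mem_unitaryGroup (specialUnitaryGroup_le_unitaryGroup A.2) k⟩

theorem continuous_colToSphere (k : n) : Continuous (colToSphere (𝕜 := 𝕜) k) :=
  ((PiLp.continuous_toLp 2 _).comp
    (continuous_pi fun i => continuous_subtype_val.matrix_elem i k)).subtype_mk _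

theorem colToSphere_surjective {j k : n} (hjk : j ≠ k) :
    Function.Surjective (colToSphere (𝕜 := 𝕜) k) := by
  rintro ⟨v, hv⟩
  obtain ⟨A, hA, rfl⟩ := exists_mem_specialUnitaryGroup_col_eq hjk (mem_sphere_zero_iff_norm.1 hv)
  exact ⟨⟨A, hA⟩, rfl⟩

end specialUnitaryGroup

end Matrix

noncomputable def quotHomeomorphOfSurjective {X Y : Type*} [TopologicalSpace X] [CompactSpace X]
    [TopologicalSpace Y] [T2Space Y] {r : X → X → Prop} {f : X → Y} (hf : Continuous f)
    (hsurj : Function.Surjective f) (hr : ∀ a b, r a b ↔ f a = f b) : Quot r ≃ₜ Y :=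
  have hlift : Function.Bijective (Quot.lift f fun a b => (hr a b).1) :=
    ⟨fun x y => Quot.induction_on₂ x y fun a b h => Quot.sound ((hr a b).2 h),
      (Quot.surjective_lift _).2 hsurj⟩
  (continuous_quot_lift _ hf).homeoOfEquivCompactToT2 (f := Equiv.ofBijective _ hlift)

theorem col_two_mul_iota (M : Matrix (Fin 3) (Fin 3) ℂ) (C : Matrix (Fin 2) (Fin 2) ℂ) :
    (M * iota C).col 2 = M.col 2 := by
  ext i
  simp [iota, mul_apply, Fin.sum_univ_three]

theorem iota_injective : Function.Injective iota := by
  intro C D h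
  ext i j
  fin_cases i <;> fin_cases j
  exacts [congrFun₂ h 0 0, congrFun₂ h 0 1, congrFun₂ h 1 0, congrFun₂ h 1 1]

theorem iota_one : iota 1 = 1 := by
  ext i j
  fin_cases i <;> fin_cases j <;> rfl

theorem iota_mul (C D : Matrix (Fin 2) (Fin 2) ℂ) : iota (C * D) = iota C * iota D := by
  ext i j
  fin_cases i <;> fin_cases j <;> simp [iota, mul_apply, Fin.sum_univ_three, Fin.sum_univ_two]

theorem star_iota (C : Matrix (Fin 2) (Fin 2) ℂ) : star (iota C) = iota (star C) := by
  ext i j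
  fin_cases i <;> fin_cases j <;> simp [iota]

theorem det_iota (C : Matrix (Fin 2) (Fin 2) ℂ) : (iota C).det = C.det := by
  simp [iota, det_fin_three, det_fin_two]

theorem mem_specialUnitaryGroup_of_iota_mem {C : Matrix (Fin 2) (Fin 2) ℂ}
    (hC : iota C ∈ specialUnitaryGroup (Fin 3) ℂ) : C ∈ specialUnitaryGroup (Fin 2) ℂ := by
  obtain ⟨hu, hdet⟩ := mem_specialUnitaryGroup_iff.1 hC
  refine mem_specialUnitaryGroup_iff.2
    ⟨mem_unitaryGroup_iff'.2 (iota_injective ?_), det_iota C ▸ hdet⟩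
  rw [iota_mul, ← star_iota, iota_one]
  exact mem_unitaryGroup_iff'.1 hu

theorem eq_iota_of_mulVec_single {M : Matrix (Fin 3) (Fin 3) ℂ}
    (hM : M *ᵥ Pi.single 2 1 = Pi.single 2 1) (hM' : star M *ᵥ Pi.single 2 1 = Pi.single 2 1) :
    M = iota (M.submatrix Fin.castSucc Fin.castSucc) := by
  rw [mulVec_single_one] at hM hM'
  have hcol i : M i 2 = (Pi.single 2 1 : Fin 3 → ℂ) i := congrFun hM i
  have hrow i : star (M 2 i) = (Pi.single 2 1 : Fin 3 → ℂ) i := congrFun hM' i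
  ext i j
  fin_cases i <;> fin_cases j <;> simp [iota, hcol, ← star_eq_iff_star_eq.1 (hrow _)]

theorem su2Rel_of_col_two_eq {A B : specialUnitaryGroup (Fin 3) ℂ}
    (h : (A : Matrix (Fin 3) (Fin 3) ℂ).col 2 = (B : Matrix (Fin 3) (Fin 3) ℂ).col 2) :
    su2Rel A B := by
  set M : Matrix (Fin 3) (Fin 3) ℂ := star (A : Matrix (Fin 3) (Fin 3) ℂ) * B
  have hM : M ∈ specialUnitaryGroup (Fin 3) ℂ := (star A * B).2
  have hMe : M *ᵥ Pi.single 2 1 = Pi.single 2 1 := by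
    rw [← mulVec_mulVec, mulVec_single_one, ← h, ← mulVec_single_one, mulVec_mulVec,
      Unitary.star_mul_self_of_mem (specialUnitaryGroup_le_unitaryGroup A.2), one_mulVec]
  have hM_eq := eq_iota_of_mulVec_single hMe (mulVec_eq_self_of_mul_eq_one
    (Unitary.star_mul_self_of_mem (specialUnitaryGroup_le_unitaryGroup hM)) hMe)
  refine ⟨_, mem_specialUnitaryGroup_of_iota_mem (hM_eq ▸ hM), ?_⟩
  rw [← hM_eq, ← mul_assoc,
    Unitary.mul_star_self_of_mem (specialUnitaryGroup_le_unitaryGroup A.2), one_mul]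

theorem su2Rel_iff_colToSphere_eq (A B : specialUnitaryGroup (Fin 3) ℂ) :
    su2Rel A B ↔ specialUnitaryGroup.colToSphere 2 A = specialUnitaryGroup.colToSphere 2 B := by
  refine ⟨fun ⟨C, _, hB⟩ => ?_, fun h => su2Rel_of_col_two_eq congr(WithLp.ofLp ($h).1)⟩
  simp only [specialUnitaryGroup.colToSphere, hB, col_two_mul_iota]

/-- The quotient `SU(3)/SU(2)` is homeomorphic to the `5`-sphere: the third-column map descends
to a homeomorphism from the orbit space of the right `SU(2)`-action on `SU(3)` onto the unit
sphere `S⁵` of `ℂ³`. -/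
theorem su3_mod_su2_homeomorph_sphere :
    ∃ h : Quot su2Rel ≃ₜ Metric.sphere (0 : EuclideanSpace ℂ (Fin 3)) 1,
      ∀ A : Matrix.specialUnitaryGroup (Fin 3) ℂ, ∀ i : Fin 3,
        ((h (Quot.mk su2Rel A) : EuclideanSpace ℂ (Fin 3)) i)
          = (A : Matrix (Fin 3) (Fin 3) ℂ) i 2 :=
  ⟨quotHomeomorphOfSurjective (specialUnitaryGroup.continuous_colToSphere 2)
    (specialUnitaryGroup.colToSphere_surjective (by decide : (0 : Fin 3) ≠ 2))
    su2Rel_iff_colToSphere_eq, fun _ _ => rfl⟩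
end

section
/- The third-column map π̃ : SU(3) → S⁵ is a locally trivial fiber bundle with fiber SU(2): every point x of the unit sphere S⁵ of ℂ³ has an open neighborhood over which π̃ admits a trivialization with fiber SU(2) (i.e., a fiberwise homeomorphism of π̃⁻¹ of that neighborhood with the product of the neighborhood and SU(2)). -/
/-!
Embedded as `B ↦ diag(B, 1)`, `SU(2)` is exactly the stabilizer of `e₃` in `SU(3)`, so the
fibers of the third-column map `π` are the left cosets of `SU(2)`. A continuous section `s` of
`π` over an open set `U` then trivializes `π` over `U` by `g ↦ (π g, s(π g)⁻¹ g)`. Over the open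
set of unit vectors `(a, b, c)` with `(b, c) ≠ 0`, a section is given by completing `(a, b, c)`
with the columns `(n, -āb/n, -āc/n)` and `(0, c̄/n, -b̄/n)`, where `n = √(|b|² + |c|²)`; its
translates by elements of `SU(3)` cover the sphere.
-/

open Topology Set Matrix ComplexConjugate

namespace Bundle.Trivialization

variable {G X : Type*} [Group G] [TopologicalSpace G] [IsTopologicalGroup G] [TopologicalSpace X]
  {f : G → X} {H : Subgroup G}

open Classical in
noncomputable def ofLocalSection (hf : Continuous f)
    (hfib : ∀ g g', f g = f g' ↔ g⁻¹ * g' ∈ H)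
    {U : Set X} (hU : IsOpen U) {s : X → G} (hs : ContinuousOn s U)
    (hsec : ∀ y ∈ U, f (s y) = y) : Trivialization H f :=
  have hf_mul (g : G) (h : H) : f (g * h) = f g := ((hfib _ _).2 (by simp)).symm
  have hmem (g : G) (hg : g ∈ f ⁻¹' U) : (s (f g))⁻¹ * g ∈ H := (hfib _ _).1 (hsec _ hg)
  { toFun := fun g => (f g, if h : (s (f g))⁻¹ * g ∈ H then ⟨_, h⟩ else 1)
    invFun := fun p => s p.1 * p.2
    source := f ⁻¹' U
    target := U ×ˢ univ
    map_source' := fun _ hg => ⟨hg, trivial⟩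
    map_target' := fun p hp => by simp only [mem_preimage, hf_mul, hsec _ hp.1, hp.1]
    left_inv' := fun g hg => by simp [dif_pos (hmem g hg)]
    right_inv' := fun p hp => by
      have hfp : f (s p.1 * p.2) = p.1 := by rw [hf_mul, hsec _ hp.1]
      simp [hfp]
    open_source := hU.preimage hf
    open_target := hU.prod isOpen_univ
    continuousOn_toFun := by
      refine hf.continuousOn.prodMk ?_
      rw [IsEmbedding.subtypeVal.continuousOn_iff]
      refine ((hs.comp hf.continuousOn fun _ hg => hg).inv.mul continuousOn_id).congr
        fun g hg => ?_
      simp [dif_pos (hmem g hg)]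
    continuousOn_invFun := (hs.comp continuousOn_fst fun _ hp => hp.1).mul
      (continuous_subtype_val.comp continuous_snd).continuousOn
    baseSet := U
    open_baseSet := hU
    source_eq := rfl
    target_eq := rfl
    proj_toFun := fun _ _ => rfl }

end Bundle.Trivialization

instance Matrix.specialUnitaryGroup.instIsTopologicalGroup {n α : Type*} [Fintype n]
    [DecidableEq n] [CommRing α] [StarRing α] [TopologicalSpace α] [IsTopologicalRing α]
    [ContinuousStar α] : IsTopologicalGroup (specialUnitaryGroup n α) where
  continuous_inv := continuous_induced_rng.mpr continuous_subtype_val.star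

lemma Complex.ofReal_sqrt_normSq_add_normSq_ne_zero {b c : ℂ}
    (h : Complex.normSq b + Complex.normSq c ≠ 0) :
    ((√(Complex.normSq b + Complex.normSq c) : ℝ) : ℂ) ≠ 0 := by
  rw [Complex.ofReal_ne_zero, Real.sqrt_ne_zero']
  exact (add_nonneg (Complex.normSq_nonneg _) (Complex.normSq_nonneg _)).lt_of_ne' h

namespace Matrix

variable {R : Type*}

lemma star_mulVec_dotProduct_mulVec {n : Type*} [Fintype n] [DecidableEq n] [CommRing R]
    [StarRing R] {U : Matrix n n R} (hU : U ∈ unitaryGroup n R) (v : n → R) :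
    star (U *ᵥ v) ⬝ᵥ (U *ᵥ v) = star v ⬝ᵥ v := by
  rw [star_mulVec, ← dotProduct_mulVec, mulVec_mulVec, ← star_eq_conjTranspose,
    mem_unitaryGroup_iff'.1 hU, one_mulVec]

def blockDiagOne [Zero R] [One R] (B : Matrix (Fin 2) (Fin 2) R) : Matrix (Fin 3) (Fin 3) R :=
  !![B 0 0, B 0 1, 0; B 1 0, B 1 1, 0; 0, 0, 1]

lemma submatrix_blockDiagOne [Zero R] [One R] (B : Matrix (Fin 2) (Fin 2) R) :
    (blockDiagOne B).submatrix Fin.castSucc Fin.castSucc = B := by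
  ext i j; fin_cases i <;> fin_cases j <;> rfl

lemma blockDiagOne_injective [Zero R] [One R] : Function.Injective (blockDiagOne (R := R)) :=
  Function.LeftInverse.injective (g := fun M => M.submatrix Fin.castSucc Fin.castSucc)
    fun B => submatrix_blockDiagOne B

lemma isEmbedding_blockDiagOne [Zero R] [One R] [TopologicalSpace R] :
    IsEmbedding (blockDiagOne (R := R)) :=
  .of_leftInverse (f := fun M => M.submatrix Fin.castSucc Fin.castSucc)
    (fun B => submatrix_blockDiagOne B)
    (continuous_id.matrix_submatrix _ _) (by unfold blockDiagOne; fun_prop)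

lemma blockDiagOne_one [Zero R] [One R] : blockDiagOne (1 : Matrix (Fin 2) (Fin 2) R) = 1 := by
  ext i j; fin_cases i <;> fin_cases j <;> rfl

lemma blockDiagOne_mul [Semiring R] (B C : Matrix (Fin 2) (Fin 2) R) :
    blockDiagOne (B * C) = blockDiagOne B * blockDiagOne C := by
  ext i j; fin_cases i <;> fin_cases j <;> simp [blockDiagOne, mul_apply, Fin.sum_univ_succ]

lemma star_blockDiagOne [Semiring R] [StarRing R] (B : Matrix (Fin 2) (Fin 2) R) :
    star (blockDiagOne B) = blockDiagOne (star B) := by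
  ext i j; fin_cases i <;> fin_cases j <;> simp [blockDiagOne]

lemma det_blockDiagOne [CommRing R] (B : Matrix (Fin 2) (Fin 2) R) :
    (blockDiagOne B).det = B.det := by
  simp [blockDiagOne, det_fin_three, det_fin_two]

lemma eq_blockDiagOne_of_mulVec_single [CommRing R] [StarRing R] {A : Matrix (Fin 3) (Fin 3) R}
    (hA : A ∈ unitaryGroup (Fin 3) R) (hcol : A *ᵥ Pi.single 2 1 = Pi.single 2 1) :
    A = blockDiagOne (A.submatrix Fin.castSucc Fin.castSucc) := by
  have hrow : star A *ᵥ Pi.single 2 1 = Pi.single 2 1 := by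
    rw [← hcol, mulVec_mulVec, mem_unitaryGroup_iff'.1 hA, one_mulVec, hcol]
  have hcol' (i : Fin 3) : A i 2 = if i = 2 then 1 else 0 := by
    simpa [Pi.single_apply] using congrFun hcol i
  have hrow' (j : Fin 3) : A 2 j = if j = 2 then 1 else 0 := by
    simpa [Pi.single_apply, apply_ite star] using congrArg star (congrFun hrow j)
  ext i j
  fin_cases i <;> fin_cases j <;> simp [blockDiagOne, hcol', hrow']

variable [CommRing R] [StarRing R]

lemma blockDiagOne_mem_specialUnitaryGroup {B : Matrix (Fin 2) (Fin 2) R}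
    (hB : B ∈ specialUnitaryGroup (Fin 2) R) :
    blockDiagOne B ∈ specialUnitaryGroup (Fin 3) R := by
  rw [mem_specialUnitaryGroup_iff, mem_unitaryGroup_iff'] at hB ⊢
  rw [star_blockDiagOne, ← blockDiagOne_mul, hB.1, blockDiagOne_one, det_blockDiagOne, hB.2]
  exact ⟨rfl, rfl⟩

def blockDiagOneHom : specialUnitaryGroup (Fin 2) R →* specialUnitaryGroup (Fin 3) R where
  toFun B := ⟨blockDiagOne B, blockDiagOne_mem_specialUnitaryGroup B.2⟩
  map_one' := Subtype.ext blockDiagOne_one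
  map_mul' B C := Subtype.ext <| by simp only [Submonoid.coe_mul, blockDiagOne_mul]

lemma isEmbedding_blockDiagOneHom [TopologicalSpace R] :
    IsEmbedding (blockDiagOneHom (R := R)) :=
  IsEmbedding.subtypeVal.of_comp_iff.1 <| by
    exact isEmbedding_blockDiagOne.comp IsEmbedding.subtypeVal

lemma mem_range_blockDiagOneHom_iff {A : specialUnitaryGroup (Fin 3) R} :
    A ∈ (blockDiagOneHom (R := R)).range ↔
      (A : Matrix (Fin 3) (Fin 3) R) *ᵥ Pi.single 2 1 = Pi.single 2 1 := by
  refine ⟨?_, fun hcol => ?_⟩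
  · rintro ⟨B, rfl⟩
    ext i; fin_cases i <;> simp [blockDiagOneHom, blockDiagOne]
  · have hA := eq_blockDiagOne_of_mulVec_single (specialUnitaryGroup_le_unitaryGroup A.2) hcol
    set B := (A : Matrix (Fin 3) (Fin 3) R).submatrix Fin.castSucc Fin.castSucc
    have hB : B ∈ specialUnitaryGroup (Fin 2) R := by
      have hA' := A.2
      rw [hA, mem_specialUnitaryGroup_iff, mem_unitaryGroup_iff', star_blockDiagOne,
        ← blockDiagOne_mul, ← blockDiagOne_one, blockDiagOne_injective.eq_iff,
        det_blockDiagOne] at hA'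
      rwa [mem_specialUnitaryGroup_iff, mem_unitaryGroup_iff']
    exact ⟨⟨B, hB⟩, Subtype.ext hA.symm⟩

lemma inv_mul_mem_range_blockDiagOneHom_iff {g g' : specialUnitaryGroup (Fin 3) R} :
    g⁻¹ * g' ∈ (blockDiagOneHom (R := R)).range ↔
      (g : Matrix (Fin 3) (Fin 3) R) *ᵥ Pi.single 2 1 =
        (g' : Matrix (Fin 3) (Fin 3) R) *ᵥ Pi.single 2 1 := by
  have hg := specialUnitaryGroup_le_unitaryGroup g.2
  rw [mem_range_blockDiagOneHom_iff, Submonoid.coe_mul, ← mulVec_mulVec]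
  change star (g : Matrix (Fin 3) (Fin 3) R) *ᵥ _ = _ ↔ _
  constructor
  · intro h
    calc _ = (g : Matrix (Fin 3) (Fin 3) R) *ᵥ (star (g : Matrix (Fin 3) (Fin 3) R) *ᵥ
          (g' : Matrix (Fin 3) (Fin 3) R) *ᵥ Pi.single 2 1) := by rw [h]
      _ = _ := by rw [mulVec_mulVec, mem_unitaryGroup_iff.1 hg, one_mulVec]
  · intro h
    rw [← h, mulVec_mulVec, mem_unitaryGroup_iff'.1 hg, one_mulVec]

noncomputable def unitCompletion (v : Fin 3 → ℂ) : Matrix (Fin 3) (Fin 3) ℂ :=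
  let n : ℂ := √(Complex.normSq (v 1) + Complex.normSq (v 2))
  !![n, 0, v 0;
     -conj (v 0) * v 1 / n, conj (v 2) / n, v 1;
     -conj (v 0) * v 2 / n, -conj (v 1) / n, v 2]

lemma unitCompletion_mulVec_single (v : Fin 3 → ℂ) :
    unitCompletion v *ᵥ Pi.single 2 1 = v := by
  ext i; fin_cases i <;> simp [unitCompletion]

lemma continuousOn_unitCompletion :
    ContinuousOn unitCompletion {v | Complex.normSq (v 1) + Complex.normSq (v 2) ≠ 0} := by
  have hn (v : Fin 3 → ℂ) (hv : Complex.normSq (v 1) + Complex.normSq (v 2) ≠ 0) :=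
    Complex.ofReal_sqrt_normSq_add_normSq_ne_zero hv
  unfold unitCompletion
  refine continuousOn_pi.2 fun i => continuousOn_pi.2 fun j => ?_
  fin_cases i <;> fin_cases j <;> simp <;> fun_prop (disch := exact hn)

lemma unitCompletion_mem_specialUnitaryGroup {v : Fin 3 → ℂ} (hv : star v ⬝ᵥ v = 1)
    (hv12 : Complex.normSq (v 1) + Complex.normSq (v 2) ≠ 0) :
    unitCompletion v ∈ specialUnitaryGroup (Fin 3) ℂ := by
  have hn := Complex.ofReal_sqrt_normSq_add_normSq_ne_zero hv12
  have hn_sq : ((√(Complex.normSq (v 1) + Complex.normSq (v 2)) : ℝ) : ℂ) ^ 2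
      = conj (v 1) * v 1 + conj (v 2) * v 2 := by
    rw [← Complex.ofReal_pow,
      Real.sq_sqrt (add_nonneg (Complex.normSq_nonneg _) (Complex.normSq_nonneg _))]
    simp [Complex.normSq_eq_conj_mul_self]
  have hn_conj := Complex.conj_ofReal √(Complex.normSq (v 1) + Complex.normSq (v 2))
  have hv' : conj (v 0) * v 0 + conj (v 1) * v 1 + conj (v 2) * v 2 = 1 := by
    rw [← hv]; simp [dotProduct, Fin.sum_univ_three, mul_comm]
  unfold unitCompletion
  generalize ((√(Complex.normSq (v 1) + Complex.normSq (v 2)) : ℝ) : ℂ) = n at hn hn_sq hn_conj ⊢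
  rw [mem_specialUnitaryGroup_iff, mem_unitaryGroup_iff']
  constructor
  · ext i j
    fin_cases i <;> fin_cases j <;> simp [mul_apply, Fin.sum_univ_three, hn_conj] <;>
      field_simp
    · linear_combination (n ^ 2 - conj (v 0) * v 0) * hn_sq + n ^ 2 * hv'
    · ring
    · linear_combination v 0 * hn_sq
    · ring
    · linear_combination -hn_sq
    · ring
    · linear_combination conj (v 0) * hn_sq
    · ring
    · linear_combination hv'
  · simp [det_fin_three]
    field_simp
    linear_combination n ^ 2 * hv' - conj (v 0) * v 0 * hn_sq

end Matrix

local notation "ℂ³" => EuclideanSpace ℂ (Fin 3)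
local notation "S⁵" => Metric.sphere (0 : ℂ³) 1
local notation "SU(" n ")" => specialUnitaryGroup (Fin n) ℂ

lemma star_dotProduct_self_of_mem_sphere (y : S⁵) :
    star (WithLp.ofLp (y : ℂ³)) ⬝ᵥ WithLp.ofLp (y : ℂ³) = 1 := by
  rw [dotProduct_comm, ← EuclideanSpace.inner_eq_star_dotProduct, inner_self_eq_norm_sq_to_K,
    mem_sphere_zero_iff_norm.1 y.2]
  simp

def columnChart (P : SU(3)) : Set S⁵ :=
  {y | Complex.normSq ((star (P : Matrix (Fin 3) (Fin 3) ℂ) *ᵥ WithLp.ofLp (y : ℂ³)) 1) +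
    Complex.normSq ((star (P : Matrix (Fin 3) (Fin 3) ℂ) *ᵥ WithLp.ofLp (y : ℂ³)) 2) ≠ 0}

lemma isOpen_columnChart (P : SU(3)) : IsOpen (columnChart P) :=
  isOpen_ne_fun (by fun_prop) continuous_const

lemma exists_mem_columnChart (x : S⁵) : ∃ P, x ∈ columnChart P := by
  by_cases h : Complex.normSq ((x : ℂ³) 1) + Complex.normSq ((x : ℂ³) 2) = 0
  · have hx := star_dotProduct_self_of_mem_sphere x
    obtain ⟨hx1, hx2⟩ :=
      (add_eq_zero_iff_of_nonneg (Complex.normSq_nonneg _) (Complex.normSq_nonneg _)).1 h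
    rw [Complex.normSq_eq_zero] at hx1 hx2
    have hx0 : (x : ℂ³) 0 ≠ 0 := by
      rintro hx0
      simp [dotProduct, Fin.sum_univ_three, hx0, hx1, hx2] at hx
    refine ⟨⟨!![0, -1, 0; 1, 0, 0; 0, 0, 1], ?_⟩, ?_⟩
    · rw [mem_specialUnitaryGroup_iff, mem_unitaryGroup_iff']
      refine ⟨?_, by simp [det_fin_three]⟩
      ext i j
      fin_cases i <;> fin_cases j <;> simp [mul_apply, Fin.sum_univ_three]
    · simpa [columnChart, mulVec, dotProduct, Fin.sum_univ_three, hx2] using hx0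
  · exact ⟨1, by simpa [columnChart] using h⟩

lemma exists_continuousOn_section_columnChart (P : SU(3)) :
    ∃ s : S⁵ → SU(3), ContinuousOn s (columnChart P) ∧ ∀ y ∈ columnChart P,
      (s y : Matrix (Fin 3) (Fin 3) ℂ) *ᵥ Pi.single 2 1 = WithLp.ofLp (y : ℂ³) := by
  classical
  set m : S⁵ → Matrix (Fin 3) (Fin 3) ℂ := fun y =>
    P * unitCompletion (star (P : Matrix (Fin 3) (Fin 3) ℂ) *ᵥ WithLp.ofLp (y : ℂ³))
  have hP := specialUnitaryGroup_le_unitaryGroup P.2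
  have hm (y : S⁵) (hy : y ∈ columnChart P) : m y ∈ SU(3) :=
    mul_mem P.2 <| unitCompletion_mem_specialUnitaryGroup (by
      rw [star_mulVec_dotProduct_mulVec (Unitary.star_mem hP),
        star_dotProduct_self_of_mem_sphere]) hy
  refine ⟨fun y => if h : m y ∈ SU(3) then ⟨m y, h⟩ else 1, ?_, fun y hy => ?_⟩
  · rw [IsEmbedding.subtypeVal.continuousOn_iff]
    have hm_cont : ContinuousOn m (columnChart P) :=
      continuousOn_const.mul (continuousOn_unitCompletion.comp (by fun_prop) fun y hy => hy)
    exact hm_cont.congr fun y hy => by simp [dif_pos (hm y hy)]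
  · simp only [dif_pos (hm y hy), m, ← mulVec_mulVec, unitCompletion_mulVec_single]
    rw [mulVec_mulVec, mem_unitaryGroup_iff.1 hP, one_mulVec]

section ColumnMap

variable {proj : SU(3) → S⁵}
  (hcol : ∀ A, WithLp.ofLp (proj A : ℂ³) = (A : Matrix (Fin 3) (Fin 3) ℂ) *ᵥ Pi.single 2 1)
include hcol

lemma continuous_of_ofLp_eq_mulVec_single : Continuous proj := by
  rw [IsEmbedding.subtypeVal.continuous_iff]
  have : Subtype.val ∘ proj =
      fun A : SU(3) => WithLp.toLp 2 ((A : Matrix (Fin 3) (Fin 3) ℂ) *ᵥ Pi.single 2 1) :=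
    funext fun A => by simp [← hcol]
  rw [this]
  fun_prop

lemma eq_iff_inv_mul_mem_range_of_ofLp_eq_mulVec_single (g g' : SU(3)) :
    proj g = proj g' ↔ g⁻¹ * g' ∈ (blockDiagOneHom (R := ℂ)).range := by
  rw [inv_mul_mem_range_blockDiagOneHom_iff, ← hcol, ← hcol]
  exact Subtype.ext_iff.trans (WithLp.ofLp_injective 2).eq_iff.symm

end ColumnMap

/-- The third-column projection `π̃ : SU(3) → S⁵` is a locally trivial fiber bundle with fiber
`SU(2)`: every point of the sphere lies in the base set of some trivialization with fiber
`SU(2)`. -/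
theorem third_column_is_fiber_bundle
    (proj : Matrix.specialUnitaryGroup (Fin 3) ℂ →
      Metric.sphere (0 : EuclideanSpace ℂ (Fin 3)) 1)
    (hproj : ∀ A : Matrix.specialUnitaryGroup (Fin 3) ℂ, ∀ i : Fin 3,
      ((proj A : EuclideanSpace ℂ (Fin 3)) i) = (A : Matrix (Fin 3) (Fin 3) ℂ) i 2)
    (x : Metric.sphere (0 : EuclideanSpace ℂ (Fin 3)) 1) :
    ∃ e : Bundle.Trivialization (Matrix.specialUnitaryGroup (Fin 2) ℂ) proj, x ∈ e.baseSet := by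
  have hcol (A : SU(3)) :
      WithLp.ofLp (proj A : ℂ³) = (A : Matrix (Fin 3) (Fin 3) ℂ) *ᵥ Pi.single 2 1 := by
    ext i; simp [hproj]
  obtain ⟨P, hxP⟩ := exists_mem_columnChart x
  obtain ⟨s, hs, hsec⟩ := exists_continuousOn_section_columnChart P
  have hproj_s (y : S⁵) (hy : y ∈ columnChart P) : proj (s y) = y := by
    rw [Subtype.ext_iff, ← (WithLp.ofLp_injective 2).eq_iff, hcol, hsec y hy]
  let e := Bundle.Trivialization.ofLocalSection (continuous_of_ofLp_eq_mulVec_single hcol)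
    (eq_iff_inv_mul_mem_range_of_ofLp_eq_mulVec_single hcol) (isOpen_columnChart P) hs hproj_s
  have hfiber : SU(2) ≃ₜ blockDiagOneHom.range :=
    isEmbedding_blockDiagOneHom.toHomeomorph.trans
      (Homeomorph.setCongr blockDiagOneHom.coe_range.symm)
  exact ⟨e.transFiberHomeomorph hfiber.symm, hxP⟩
end

section
/- Parametrization of the fiber over the singular locus: let (z₁, z₂) ∈ ℂ² with |z₁|² + |z₂|² = 1. A matrix A ∈ SU(3) has third column (z₁, z₂, 0) if and only if there exist a, b ∈ ℂ with |a|² + |b|² = 1 such that A = C_{a,b}, where C_{a,b} is the product of the matrix with rows (0, z̄₂, z₁), (0, −z̄₁, z₂), (1, 0, 0) and the matrix with rows (a, b, 0), (−b̄, ā, 0), (0, 0, 1). -/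
/-!
For `A ∈ SU(3)` we have `star A = A⁻¹ = adjugate A`, so every entry of `A` is the conjugate of
its cofactor. When `A 2 2 = 0`, the four upper-left cofactors involve only the third column
`(z₁, z₂, 0)` and the third row `(a, b, 0)`, and they are exactly the entries of `C_{a,b}`;
unitarity of the third row gives `|a|² + |b|² = 1`.
-/

open ComplexConjugate

namespace Matrix

variable {n : Type*} [Fintype n] [DecidableEq n]

theorem star_eq_adjugate_of_mem_specialUnitaryGroup {α : Type*} [CommRing α] [StarRing α]
    {A : Matrix n n α} (hA : A ∈ specialUnitaryGroup n α) : star A = A.adjugate := by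
  obtain ⟨hU, hdet⟩ := mem_specialUnitaryGroup_iff.mp hA
  rw [← inv_eq_left_inv (mem_unitaryGroup_iff'.mp hU), inv_def, hdet, Ring.inverse_one, one_smul]

theorem sum_norm_sq_row_eq_one_of_mem_unitaryGroup {𝕜 : Type*} [RCLike 𝕜]
    {A : Matrix n n 𝕜} (hA : A ∈ unitaryGroup n 𝕜) (i : n) : ∑ j, ‖A i j‖ ^ 2 = 1 := by
  have hii := congrFun (congrFun (mem_unitaryGroup_iff.mp hA) i) i
  simp only [mul_apply, star_apply, one_apply_eq, RCLike.star_def, RCLike.mul_conj] at hii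
  exact_mod_cast hii

theorem eq_mul_of_mem_specialUnitaryGroup_of_apply_two_two_eq_zero {α : Type*} [CommRing α]
    [StarRing α] {A : Matrix (Fin 3) (Fin 3) α} (hA : A ∈ specialUnitaryGroup (Fin 3) α)
    (h22 : A 2 2 = 0) :
    A = !![0, conj (A 1 2), A 0 2;
           0, -conj (A 0 2), A 1 2;
           1, 0, 0] *
        !![A 2 0, A 2 1, 0;
           -conj (A 2 1), conj (A 2 0), 0;
           0, 0, 1] := by
  have hcof : ∀ i j, A i j = conj (A.adjugate j i) := fun i j => by
    rw [← star_eq_adjugate_of_mem_specialUnitaryGroup hA, star_apply, starRingEnd_apply,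
      star_star]
  have h00 : A 0 0 = -(conj (A 1 2) * conj (A 2 1)) := by
    rw [hcof]; simp [adjugate_fin_three, h22]
  have h01 : A 0 1 = conj (A 1 2) * conj (A 2 0) := by
    rw [hcof]; simp [adjugate_fin_three, h22]
  have h10 : A 1 0 = conj (A 0 2) * conj (A 2 1) := by
    rw [hcof]; simp [adjugate_fin_three, h22]
  have h11 : A 1 1 = -(conj (A 0 2) * conj (A 2 0)) := by
    rw [hcof]; simp [adjugate_fin_three, h22]
  ext i j
  fin_cases i <;> fin_cases j <;> simp [mul_apply, Fin.sum_univ_three, h00, h01, h10, h11, h22]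

end Matrix

theorem fiber_over_singular_locus_general (z₁ z₂ : ℂ)
    (A : Matrix (Fin 3) (Fin 3) ℂ) (hA : A ∈ Matrix.specialUnitaryGroup (Fin 3) ℂ) :
    (A 0 2 = z₁ ∧ A 1 2 = z₂ ∧ A 2 2 = 0) ↔
      ∃ a b : ℂ, ‖a‖ ^ 2 + ‖b‖ ^ 2 = 1 ∧
        A = !![0, conj z₂, z₁;
               0, -conj z₁, z₂;
               1, 0, 0] *
            !![a, b, 0;
               -conj b, conj a, 0;
               0, 0, 1] := by
  constructor
  · rintro ⟨rfl, rfl, h22⟩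
    have hrow := Matrix.sum_norm_sq_row_eq_one_of_mem_unitaryGroup
      (Matrix.specialUnitaryGroup_le_unitaryGroup hA) 2
    refine ⟨A 2 0, A 2 1, ?_,
      Matrix.eq_mul_of_mem_specialUnitaryGroup_of_apply_two_two_eq_zero hA h22⟩
    simpa [Fin.sum_univ_three, h22] using hrow
  · rintro ⟨a, b, -, rfl⟩
    simp [Matrix.mul_apply, Fin.sum_univ_three]

/-- Parametrization of the fiber of the third-column map over a point `(z₁, z₂, 0)` of the
singular locus: `A ∈ SU(3)` has third column `(z₁, z₂, 0)` iff `A = C_{a,b}` for some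
`a, b ∈ ℂ` with `|a|² + |b|² = 1`. -/
theorem fiber_over_singular_locus (z₁ z₂ : ℂ)
    (hz : ‖z₁‖ ^ 2 + ‖z₂‖ ^ 2 = 1)
    (A : Matrix (Fin 3) (Fin 3) ℂ) (hA : A ∈ Matrix.specialUnitaryGroup (Fin 3) ℂ) :
    (A 0 2 = z₁ ∧ A 1 2 = z₂ ∧ A 2 2 = 0) ↔
      ∃ a b : ℂ, ‖a‖ ^ 2 + ‖b‖ ^ 2 = 1 ∧
        A = !![0, conj z₂, z₁;
               0, -conj z₁, z₂;
               1, 0, 0] *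
            !![a, b, 0;
               -conj b, conj a, 0;
               0, 0, 1] :=
  fiber_over_singular_locus_general z₁ z₂ A hA
end
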